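/- arXiv:2106.08173 — 2 statements merged into one kernel-verified Lean document; each statement's English description precedes it below -/
import Mathlib

section
/- Let R be a commutative noetherian ring, I an ideal of R, and X a chain complex of R-modules such that each module X_n is I-adically complete. If for some integer i one has I • H_i(X) = H_i(X), then H_i(X) = 0. -/
/-!
The cycles `Z = ker dᵢ` form a submodule of the `I`-adically separated module `Xᵢ`, hence are
themselves `I`-adically separated, and `I • Hᵢ(X) = Hᵢ(X)` says that the boundary map
`Xᵢ₊₁ → Z` is surjective modulo `I • Z`. A map from a precomplete module to a separated one
that is surjective modulo `I` is surjective (successive approximation), so every cycle is a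
boundary.
-/

section

open Submodule

variable {R M N : Type*} [CommRing R] {I : Ideal R}
  [AddCommGroup M] [Module R M] [AddCommGroup N] [Module R N]

theorem IsHausdorff.of_injective [IsHausdorff I N] {f : M →ₗ[R] N}
    (hf : Function.Injective f) : IsHausdorff I M where
  haus' x hx := hf <| by
    refine (map_zero f).symm ▸ IsHausdorff.haus ‹_› (f x) fun n => ?_
    simpa using ((hx n).map f).mono (by rw [map_smul'']; exact smul_mono_right _ le_top)

theorem Submodule.smul_top_eq_top_of_linearEquiv (e : M ≃ₗ[R] N)
    (h : I • (⊤ : Submodule R M) = ⊤) : I • (⊤ : Submodule R N) = ⊤ := by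
  simpa [map_smul''] using congrArg (map (e : M →ₗ[R] N)) h

theorem Submodule.surjective_mkQ_smul_top_comp_iff (f : M →ₗ[R] N) :
    Function.Surjective ((I • ⊤ : Submodule R N).mkQ ∘ₗ f) ↔
      I • (⊤ : Submodule R (N ⧸ LinearMap.range f)) = ⊤ := by
  rw [← LinearMap.range_eq_top, LinearMap.range_comp, map_mkQ_eq_top, sup_comm,
    ← map_mkQ_eq_top, map_smul'', map_top, range_mkQ]

theorem surjective_of_smul_top_quotient_range_eq_top [IsPrecomplete I M] [IsHausdorff I N]
    {f : M →ₗ[R] N} (h : I • (⊤ : Submodule R (N ⧸ LinearMap.range f)) = ⊤) :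
    Function.Surjective f :=
  surjective_of_mkQ_comp_surjective ((surjective_mkQ_smul_top_comp_iff f).2 h)

end

theorem statement0_general (R : Type) [CommRing R] (I : Ideal R)
    (X : ChainComplex (ModuleCat R) ℤ)
    (hcomplete : ∀ n : ℤ, IsAdicComplete I (X.X n))
    (i : ℤ)
    (h : I • (⊤ : Submodule R (X.homology i)) = ⊤) :
    Subsingleton (X.homology i) := by
  let S := X.sc i
  have : IsPrecomplete I S.X₁ := (hcomplete _).toIsPrecomplete
  have : IsHausdorff I S.X₂ := (hcomplete _).toIsHausdorff
  have : IsHausdorff I (LinearMap.ker S.g.hom) :=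
    .of_injective (LinearMap.ker S.g.hom).injective_subtype
  have hS : S.Exact := S.exact_iff_surjective_moduleCatToCycles.2 <|
    surjective_of_smul_top_quotient_range_eq_top <|
      Submodule.smul_top_eq_top_of_linearEquiv S.moduleCatHomologyIso.toLinearEquiv h
  exact ModuleCat.subsingleton_of_isZero ((X.exactAt_iff_isZero_homology i).1 hS)

/-- **Completed Nakayama (Simon).** Let `R` be a commutative noetherian ring, `I` an ideal
of `R`, and `X` a chain complex of `R`-modules such that each module `X n` is `I`-adically
complete.  If for some integer `i` one has `I • Hᵢ(X) = Hᵢ(X)`, then `Hᵢ(X) = 0`. -/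
theorem statement0 (R : Type) [CommRing R] [IsNoetherianRing R] (I : Ideal R)
    (X : ChainComplex (ModuleCat R) ℤ)
    (hcomplete : ∀ n : ℤ, IsAdicComplete I (X.X n))
    (i : ℤ)
    (h : I • (⊤ : Submodule R (X.homology i)) = ⊤) :
    Subsingleton (X.homology i) :=
  statement0_general R I X hcomplete i h
end

section
/- Let R be a commutative noetherian ring, I an ideal of R, X a chain complex of R-modules such that each module X_n is I-adically complete, and r an element of I. Let C denote the mapping cone of the chain map r·id_X : X → X given by multiplication by r. Then for every integer i, if H_j(C) = 0 for all j ≥ i, then H_j(X) = 0 for all j ≥ i. (Equivalently, the supremum of the degrees in which the homology of C is nonzero is at least the supremum of the degrees in which the homology of X is nonzero.) -/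
open CategoryTheory

/-- The relation of the complex shape `ComplexShape.down ℤ` is decidable. -/
instance : DecidableRel (ComplexShape.down ℤ).Rel :=
  fun a b => inferInstanceAs (Decidable (b + 1 = a))

/-- Any morphism of chain complexes of modules has a homotopy cofiber (mapping cone),
since the category of modules has binary biproducts. -/
instance (priority := 10000) {R : Type} [CommRing R] {X Y : ChainComplex (ModuleCat.{0} R) ℤ}
    (φ : X ⟶ Y) : HomologicalComplex.HasHomotopyCofiber φ :=
  ⟨fun _ _ _ => inferInstance⟩

/-! A cycle `z ∈ Xⱼ` is a cycle of the cone, hence a boundary there; reading off the two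
components of the cone gives `z = r • x + d w` with `x` again a cycle. Iterating,
`z = rⁿ • xₙ + d (∑_{k<n} rᵏ • wₖ)`. Since `r ∈ I` and `Xⱼ₊₁` is `I`-adically complete the series
converges to some `w`, and then `z - d w ∈ Iⁿ Xⱼ` for all `n`, so `z = d w` as `Xⱼ` is Hausdorff. -/

section AdicSeries

variable {R : Type*} [CommRing R] {I : Ideal R} {M N : Type*}
  [AddCommGroup M] [Module R M] [AddCommGroup N] [Module R N]

lemma pow_smul_mem_pow_smul_top {r : R} (hr : r ∈ I) {m n : ℕ} (hmn : m ≤ n) (x : M) :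
    r ^ n • x ∈ (I ^ m • ⊤ : Submodule R M) :=
  Submodule.smul_mem_smul (Ideal.pow_le_pow_right hmn (Ideal.pow_mem_pow hr n)) Submodule.mem_top

theorem IsPrecomplete.exists_smodEq_sum_pow_smul [IsPrecomplete I M] {r : R} (hr : r ∈ I)
    (y : ℕ → M) :
    ∃ L : M, ∀ n, ∑ k ∈ Finset.range n, r ^ k • y k ≡ L [SMOD (I ^ n • ⊤ : Submodule R M)] := by
  refine IsPrecomplete.prec inferInstance fun {m n} hmn => ?_
  rw [SModEq.sub_mem, ← Finset.sum_range_add_sum_Ico _ hmn, sub_add_cancel_left]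
  exact Submodule.neg_mem _ <| Submodule.sum_mem _ fun k hk =>
    pow_smul_mem_pow_smul_top hr (Finset.mem_Ico.mp hk).1 _

theorem LinearMap.subset_range_of_subset_smul_add [IsPrecomplete I M] [IsHausdorff I N]
    (f : M →ₗ[R] N) {r : R} (hr : r ∈ I) (S : Set N)
    (hS : ∀ z ∈ S, ∃ x ∈ S, ∃ w, z = r • x + f w) : S ⊆ LinearMap.range f := by
  intro z hz
  choose! x hxS w hw using hS
  have hiter : ∀ n, x^[n] z ∈ S := by
    intro n
    induction n with
    | zero => exact hz
    | succ n ih => rw [Function.iterate_succ_apply']; exact hxS _ ih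
  set s : ℕ → M := fun n => ∑ k ∈ Finset.range n, r ^ k • w (x^[k] z) with hs
  have hz_eq : ∀ n, z = r ^ n • x^[n] z + f (s n) := by
    intro n
    induction n with
    | zero => simp [hs]
    | succ n ih =>
      calc z = r ^ n • (r • x (x^[n] z) + f (w (x^[n] z))) + f (s n) := by
            rw [← hw _ (hiter n), ← ih]
        _ = r ^ (n + 1) • x^[n + 1] z + f (s (n + 1)) := by
            simp only [hs, Function.iterate_succ_apply', Finset.sum_range_succ, map_add,
              map_smul, smul_add, smul_smul, pow_succ]
            abel
  obtain ⟨L, hL⟩ := IsPrecomplete.exists_smodEq_sum_pow_smul hr fun k => w (x^[k] z)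
  refine LinearMap.mem_range.mpr ⟨L, (IsHausdorff.eq_iff_smodEq (I := I)).mpr fun n => ?_⟩
  calc f L ≡ f (s n) [SMOD (I ^ n • ⊤ : Submodule R N)] := by
        refine ((hL n).symm.map f).mono ?_
        rw [Submodule.map_smul'']
        exact smul_mono_right _ le_top
    _ ≡ z [SMOD (I ^ n • ⊤ : Submodule R N)] := by
        rw [hz_eq n, ← sub_smodEq_zero, sub_add_cancel_right, SModEq.zero]
        exact Submodule.neg_mem _ (pow_smul_mem_pow_smul_top hr le_rfl _)

end AdicSeries

namespace HomologicalComplex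

variable {R : Type*} [CommRing R] {ι : Type*} {c : ComplexShape ι}

lemma exactAt_iff_forall_moduleCat (K : HomologicalComplex (ModuleCat R) c) {i j k : ι}
    (hij : c.Rel i j) (hjk : c.Rel j k) :
    K.ExactAt j ↔ ∀ z, K.d j k z = 0 → ∃ w, K.d i j w = z := by
  rw [K.exactAt_iff' i j k (c.prev_eq' hij) (c.next_eq' hjk), ShortComplex.moduleCat_exact_iff]
  rfl

namespace homotopyCofiber

lemma exists_eq_add_of_exactAt [DecidableRel c.Rel]
    {X Y : HomologicalComplex (ModuleCat R) c} (φ : X ⟶ Y) [HasHomotopyCofiber φ] {i j k : ι}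
    (hij : c.Rel i j) (hjk : c.Rel j k) (hexact : (homotopyCofiber φ).ExactAt j)
    (y : Y.X j) (hy : Y.d j k y = 0) :
    ∃ x : X.X j, X.d j k x = 0 ∧ ∃ w : Y.X i, y = φ.f j x + Y.d i j w := by
  rw [exactAt_iff_forall_moduleCat _ hij hjk] at hexact
  obtain ⟨e, he⟩ := hexact (inrX φ j y) (by
    rw [homotopyCofiber_d, ← ConcreteCategory.comp_apply, inrX_d, ConcreteCategory.comp_apply,
      hy, map_zero])
  rw [homotopyCofiber_d] at he
  refine ⟨fstX φ i j hij e, ?_, sndX φ i e, ?_⟩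
  · have h := congr($(d_fstX φ i j k hij hjk) e)
    rw [ConcreteCategory.comp_apply, he, ← ConcreteCategory.comp_apply, inrX_fstX] at h
    simpa using h.symm
  · have h := congr($(d_sndX φ i j hij) e)
    rw [ConcreteCategory.comp_apply, he, ← ConcreteCategory.comp_apply, inrX_sndX] at h
    simpa using h

end homotopyCofiber

end HomologicalComplex

theorem statement1_general (R : Type) [CommRing R] (I : Ideal R)
    (X : ChainComplex (ModuleCat.{0} R) ℤ)
    (hcomplete : ∀ n : ℤ, IsAdicComplete I (X.X n))
    (r : R) (hr : r ∈ I)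
    (φ : X ⟶ X) (hφ : φ = r • 𝟙 X)
    (C : ChainComplex (ModuleCat.{0} R) ℤ)
    (hC : C = HomologicalComplex.homotopyCofiber φ)
    (i : ℤ) (h : ∀ j : ℤ, i ≤ j → Subsingleton (C.homology j)) :
    ∀ j : ℤ, i ≤ j → Subsingleton (X.homology j) := by
  subst hC hφ
  intro j hj
  have hrel₁ : (ComplexShape.down ℤ).Rel (j + 1) j := rfl
  have hrel₂ : (ComplexShape.down ℤ).Rel j (j - 1) := sub_add_cancel j 1
  have hcone := h j hj
  rw [← ModuleCat.isZero_iff_subsingleton, ← HomologicalComplex.exactAt_iff_isZero_homology]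
    at hcone ⊢
  have := hcomplete j
  have := hcomplete (j + 1)
  rw [X.exactAt_iff_forall_moduleCat hrel₁ hrel₂]
  intro z hz
  exact (X.d (j + 1) j).hom.subset_range_of_subset_smul_add hr {z | X.d j (j - 1) z = 0}
    (fun y hy => HomologicalComplex.homotopyCofiber.exists_eq_add_of_exactAt _ hrel₁ hrel₂
      hcone y hy) hz

/-- Let `R` be a commutative noetherian ring, `I` an ideal, `X` a chain complex of `R`-modules
all of whose components are `I`-adically complete, `r ∈ I`, and `C` the mapping cone of the
chain map `r • 𝟙 X : X ⟶ X` given by multiplication by `r`.  Then for every integer `i`, if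
`Hⱼ(C) = 0` for all `j ≥ i`, then `Hⱼ(X) = 0` for all `j ≥ i`. -/
theorem statement1 (R : Type) [CommRing R] [IsNoetherianRing R] (I : Ideal R)
    (X : ChainComplex (ModuleCat.{0} R) ℤ)
    (hcomplete : ∀ n : ℤ, IsAdicComplete I (X.X n))
    (r : R) (hr : r ∈ I)
    (φ : X ⟶ X) (hφ : φ = r • 𝟙 X)
    (C : ChainComplex (ModuleCat.{0} R) ℤ)
    (hC : C = HomologicalComplex.homotopyCofiber φ)
    (i : ℤ) (h : ∀ j : ℤ, i ≤ j → Subsingleton (C.homology j)) :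
    ∀ j : ℤ, i ≤ j → Subsingleton (X.homology j) :=
  statement1_general R I X hcomplete r hr φ hφ C hC i h
end
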